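/- arXiv:2601.01083 — 7 statements merged into one kernel-verified Lean document; each statement's English description precedes it below -/
import Mathlib

section
/- Let a, b, c, d be integers. Every 2×2 matrix whose four entries are a, b, c, d in some order (i.e., each of the 24 matrices obtained by permuting the entries) has integer eigenvalues if and only if there exist integers u, v, w, x, y, z such that u² = (a − d)² + 4bc, v² = (b − c)² + 4ad, w² = (a − b)² + 4cd, x² = (c − d)² + 4ab, y² = (a − c)² + 4bd, and z² = (b − d)² + 4ac. -/
/-!
A monic integer quadratic `X² - sX + p` has integer roots iff its discriminant `s² - 4p` is a
perfect square: the roots are `(s ± t) / 2`, and `t² ≡ s² (mod 4)` forces `s + t` to be even.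
For a matrix `[[p, q], [r, s]]` the discriminant is `(p - s)² + 4qr`, which only depends on the
unordered diagonal pair `{p, s}` and the unordered off-diagonal pair `{q, r}`. Over the 24
arrangements of `a, b, c, d` it therefore takes exactly the six listed values.
-/

/-- A 2×2 integer matrix has integer eigenvalues if its characteristic polynomial
splits over ℤ, i.e. there are integers λ₁, λ₂ with λ₁ + λ₂ = trace M and λ₁·λ₂ = det M. -/
def hasIntEigenvalues (M : Matrix (Fin 2) (Fin 2) ℤ) : Prop :=
  ∃ lam1 lam2 : ℤ, lam1 + lam2 = Matrix.trace M ∧ lam1 * lam2 = Matrix.det M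

/-- The multiset of entries of a 2×2 integer matrix. -/
def entriesMultiset (M : Matrix (Fin 2) (Fin 2) ℤ) : Multiset ℤ :=
  {M 0 0, M 0 1, M 1 0, M 1 1}

theorem Int.exists_add_eq_and_mul_eq_iff (s p : ℤ) :
    (∃ x y : ℤ, x + y = s ∧ x * y = p) ↔ ∃ t : ℤ, t ^ 2 = s ^ 2 - 4 * p := by
  refine ⟨fun ⟨x, y, hs, hp⟩ ↦ ⟨x - y, by rw [← hs, ← hp]; ring⟩, fun ⟨t, ht⟩ ↦ ?_⟩
  have h_even : Even (s ^ 2 + t ^ 2) := ⟨s ^ 2 - 2 * p, by rw [ht]; ring⟩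
  obtain ⟨k, hk⟩ : Even (s + t) := by simpa [Int.even_add, Int.even_pow] using h_even
  refine ⟨k, s - k, by ring, mul_left_cancel₀ (four_ne_zero' ℤ) ?_⟩
  linear_combination (-1 : ℤ) * ht + (t - s + 2 * k) * hk

theorem hasIntEigenvalues_iff_exists_sq (M : Matrix (Fin 2) (Fin 2) ℤ) :
    hasIntEigenvalues M ↔ ∃ t : ℤ, t ^ 2 = (M 0 0 - M 1 1) ^ 2 + 4 * M 0 1 * M 1 0 := by
  have h_discr : M.trace ^ 2 - 4 * M.det = (M 0 0 - M 1 1) ^ 2 + 4 * M 0 1 * M 1 0 := by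
    rw [Matrix.trace_fin_two, Matrix.det_fin_two]; ring
  rw [hasIntEigenvalues, Int.exists_add_eq_and_mul_eq_iff, h_discr]

theorem sq_sub_add_four_mul_eq_of_perm {p q r s a b c d : ℤ}
    (h : [p, q, r, s].Perm [a, b, c, d]) :
    (p - s) ^ 2 + 4 * q * r = (a - d) ^ 2 + 4 * b * c ∨
    (p - s) ^ 2 + 4 * q * r = (b - c) ^ 2 + 4 * a * d ∨
    (p - s) ^ 2 + 4 * q * r = (a - b) ^ 2 + 4 * c * d ∨
    (p - s) ^ 2 + 4 * q * r = (c - d) ^ 2 + 4 * a * b ∨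
    (p - s) ^ 2 + 4 * q * r = (a - c) ^ 2 + 4 * b * d ∨
    (p - s) ^ 2 + 4 * q * r = (b - d) ^ 2 + 4 * a * c := by
  have h_mem := List.mem_permutations.2 h
  simp [List.permutations, List.permutationsAux, List.permutationsAux.rec] at h_mem
  casesm* _ ∨ _ <;> obtain ⟨rfl, rfl, rfl, rfl⟩ := ‹_› <;> grind

/-- Every 2×2 matrix whose entries are a, b, c, d in some order has integer
eigenvalues iff the six discriminant conditions admit integer solutions. -/
theorem stmt_2 (a b c d : ℤ) :
    (∀ M : Matrix (Fin 2) (Fin 2) ℤ,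
        entriesMultiset M = {a, b, c, d} → hasIntEigenvalues M) ↔
    (∃ u v w x y z : ℤ,
        u ^ 2 = (a - d) ^ 2 + 4 * b * c ∧
        v ^ 2 = (b - c) ^ 2 + 4 * a * d ∧
        w ^ 2 = (a - b) ^ 2 + 4 * c * d ∧
        x ^ 2 = (c - d) ^ 2 + 4 * a * b ∧
        y ^ 2 = (a - c) ^ 2 + 4 * b * d ∧
        z ^ 2 = (b - d) ^ 2 + 4 * a * c) := by
  constructor
  · intro h
    have h_sq (p q r s : ℤ) (hperm : [p, q, r, s].Perm [a, b, c, d]) :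
        ∃ t : ℤ, t ^ 2 = (p - s) ^ 2 + 4 * q * r := by
      simpa using (hasIntEigenvalues_iff_exists_sq _).1
        (h !![p, q; r, s] (Multiset.coe_eq_coe.2 hperm))
    obtain ⟨u, hu⟩ := h_sq a b c d (.refl _)
    obtain ⟨v, hv⟩ := h_sq b a d c (by grind)
    obtain ⟨w, hw⟩ := h_sq a c d b (by grind)
    obtain ⟨x, hx⟩ := h_sq c a b d (by grind)
    obtain ⟨y, hy⟩ := h_sq a b d c (by grind)
    obtain ⟨z, hz⟩ := h_sq b a c d (by grind)
    exact ⟨u, v, w, x, y, z, hu, hv, hw, hx, hy, hz⟩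
  · rintro ⟨u, v, w, x, y, z, hu, hv, hw, hx, hy, hz⟩ M hM
    rw [hasIntEigenvalues_iff_exists_sq]
    rcases sq_sub_add_four_mul_eq_of_perm (Multiset.coe_eq_coe.1 hM) with h | h | h | h | h | h
    exacts [⟨u, hu.trans h.symm⟩, ⟨v, hv.trans h.symm⟩, ⟨w, hw.trans h.symm⟩,
      ⟨x, hx.trans h.symm⟩, ⟨y, hy.trans h.symm⟩, ⟨z, hz.trans h.symm⟩]
end

section
/- Let a, b, c, d, t, u, v be integers with a + d = b + c = t, u² = t² + 4(a − b)(b − d), and v² = t² − 4(a − b)(b − d). Then u + v and u − v are both even, and the integers r = (u + v)/2 and s = (u − v)/2 satisfy r² + s² = t² and rs = 2(a − b)(b − d). -/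
/-!
Adding and subtracting the two hypotheses gives `u² + v² = 2t²` and `u² - v² = 8(a - b)(b - d)`.
The second makes `u² - v²`, hence `u + v` and `u - v`, even; writing `u = r + s`, `v = r - s`
turns the two identities into `r² + s² = t²` and `rs = 2(a - b)(b - d)`.
-/

namespace Int

lemma even_add_of_even_sq_sub {u v : ℤ} (h : Even (u ^ 2 - v ^ 2)) : Even (u + v) := by
  simpa [even_sub, even_add, even_pow] using h

lemma even_sub_iff_even_add {u v : ℤ} : Even (u - v) ↔ Even (u + v) := by
  rw [even_sub, even_add]

lemma eq_half_add_half_sub {u v : ℤ} (h : Even (u + v)) :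
    u = (u + v) / 2 + (u - v) / 2 ∧ v = (u + v) / 2 - (u - v) / 2 := by
  have hr := two_mul_ediv_two_of_even h
  have hs := two_mul_ediv_two_of_even (even_sub_iff_even_add.mpr h)
  constructor <;> linarith

end Int

theorem stmt_5_general (a b d t u v : ℤ)
    (hu : u ^ 2 = t ^ 2 + 4 * (a - b) * (b - d))
    (hv : v ^ 2 = t ^ 2 - 4 * (a - b) * (b - d)) :
    Even (u + v) ∧ Even (u - v) ∧
      ((u + v) / 2) ^ 2 + ((u - v) / 2) ^ 2 = t ^ 2 ∧
      ((u + v) / 2) * ((u - v) / 2) = 2 * (a - b) * (b - d) := by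
  have hsum : Even (u + v) :=
    Int.even_add_of_even_sq_sub ⟨4 * (a - b) * (b - d), by linarith⟩
  refine ⟨hsum, Int.even_sub_iff_even_add.mpr hsum, ?_⟩
  obtain ⟨hur, hvr⟩ := Int.eq_half_add_half_sub hsum
  generalize (u + v) / 2 = r, (u - v) / 2 = s at hur hvr ⊢
  subst hur hvr
  constructor <;> linarith

/-- Given the two discriminant conditions under the ansatz a + d = b + c = t,
u + v and u − v are even, and r = (u+v)/2, s = (u−v)/2 form a Pythagorean
triple with t and satisfy rs = 2(a−b)(b−d). -/
theorem stmt_5 (a b c d t u v : ℤ) (h1 : a + d = t) (h2 : b + c = t)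
    (hu : u ^ 2 = t ^ 2 + 4 * (a - b) * (b - d))
    (hv : v ^ 2 = t ^ 2 - 4 * (a - b) * (b - d)) :
    Even (u + v) ∧ Even (u - v) ∧
      ((u + v) / 2) ^ 2 + ((u - v) / 2) ^ 2 = t ^ 2 ∧
      ((u + v) / 2) * ((u - v) / 2) = 2 * (a - b) * (b - d) :=
  stmt_5_general a b d t u v hu hv
end

section
/- Let r, s, t, k, l be integers with r² + s² = t², 2kl = rs, and t + k + l even. Define a = (t + k + l)/2, b = (t + k − l)/2, c = (t − k + l)/2, d = (t − k − l)/2. Then a, b, c, d are integers and every 2×2 matrix whose four entries are a, b, c, d in some order has integer eigenvalues. -/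
/-!
Since a + d = b + c = t, the entries fall into two complementary pairs {a, d} and {b, c} of
equal sum, and in any 2×2 arrangement the partner of the top-left entry sits in its row, in its
column, or on the diagonal. In the first two cases the row (column) sums agree, so (1, 1) is a
right (left) eigenvector and both eigenvalues are integers. In the diagonal case the
characteristic polynomial is X² − tX − kl or X² − tX + kl, with discriminant t² + 2rs = (r + s)²
resp. t² − 2rs = (r − s)²; its roots (t ± (r ± s))/2 are integers because t + r + s is even
whenever r² + s² = t².
-/

/-- `X ^ 2 - T * X + D` splits over `ℤ`. -/
def HasIntRoots (T D : ℤ) : Prop :=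
  ∃ lam1 lam2 : ℤ, lam1 + lam2 = T ∧ lam1 * lam2 = D

theorem Multiset.triple_eq_cases {α : Type*} {y z w a b c : α}
    (h : ({y, z, w} : Multiset α) = {a, b, c}) :
    (y = a ∧ ({z, w} : Multiset α) = {b, c}) ∨ (z = a ∧ ({y, w} : Multiset α) = {b, c}) ∨
      (w = a ∧ ({y, z} : Multiset α) = {b, c}) := by
  have ha : a ∈ ({y, z, w} : Multiset α) := h ▸ by simp
  simp only [Multiset.insert_eq_cons] at h ⊢
  rcases (by simpa using ha : a = y ∨ a = z ∨ a = w) with rfl | rfl | rfl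
  · exact Or.inl ⟨rfl, (Multiset.cons_inj_right a).1 h⟩
  · rw [Multiset.cons_swap] at h
    exact Or.inr (Or.inl ⟨rfl, (Multiset.cons_inj_right a).1 h⟩)
  · rw [← Multiset.insert_eq_cons z, Multiset.pair_comm, Multiset.insert_eq_cons,
      Multiset.cons_swap] at h
    exact Or.inr (Or.inr ⟨rfl, (Multiset.cons_inj_right a).1 h⟩)

theorem Multiset.add_eq_add_and_mul_eq_mul_of_pair_eq {α : Type*} [CommSemiring α] {x y a b : α}
    (h : ({x, y} : Multiset α) = {a, b}) :
    x + y = a + b ∧ x * y = a * b := by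
  constructor
  · simpa using congrArg Multiset.sum h
  · simpa using congrArg Multiset.prod h

theorem hasIntEigenvalues_iff (M : Matrix (Fin 2) (Fin 2) ℤ) :
    hasIntEigenvalues M ↔ HasIntRoots (M 0 0 + M 1 1) (M 0 0 * M 1 1 - M 0 1 * M 1 0) := by
  rw [hasIntEigenvalues, Matrix.trace_fin_two, Matrix.det_fin_two, HasIntRoots]

theorem hasIntEigenvalues_of_row_sum_eq {M : Matrix (Fin 2) (Fin 2) ℤ}
    (h : M 0 0 + M 0 1 = M 1 0 + M 1 1) : hasIntEigenvalues M :=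
  (hasIntEigenvalues_iff M).2
    ⟨M 0 0 + M 0 1, M 1 1 - M 0 1, by ring, by linear_combination (-M 0 1) * h⟩

theorem hasIntEigenvalues_of_col_sum_eq {M : Matrix (Fin 2) (Fin 2) ℤ}
    (h : M 0 0 + M 1 0 = M 0 1 + M 1 1) : hasIntEigenvalues M :=
  (hasIntEigenvalues_iff M).2
    ⟨M 0 0 + M 1 0, M 1 1 - M 1 0, by ring, by linear_combination (-M 1 0) * h⟩

theorem hasIntEigenvalues_of_entriesMultiset_eq_cons {M : Matrix (Fin 2) (Fin 2) ℤ}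
    {x p' q q' : ℤ} (hx : M 0 0 = x) (hM : entriesMultiset M = {x, p', q, q'})
    (hsum : x + p' = q + q') (hdiag : HasIntRoots (x + p') (x * p' - q * q')) :
    hasIntEigenvalues M := by
  subst hx
  simp only [entriesMultiset, Multiset.insert_eq_cons, Multiset.cons_inj_right] at hM
  rcases Multiset.triple_eq_cases hM with ⟨hrow, hpair⟩ | ⟨hcol, hpair⟩ | ⟨hw, hpair⟩ <;>
    obtain ⟨hpair_add, hpair_mul⟩ := Multiset.add_eq_add_and_mul_eq_mul_of_pair_eq hpair
  · exact hasIntEigenvalues_of_row_sum_eq (by linarith)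
  · exact hasIntEigenvalues_of_col_sum_eq (by linarith)
  · rwa [hasIntEigenvalues_iff, hw, hpair_mul]

theorem hasIntEigenvalues_of_entriesMultiset_eq {M : Matrix (Fin 2) (Fin 2) ℤ}
    {p q q' p' : ℤ} (hM : entriesMultiset M = {p, q, q', p'}) (hsum : p + p' = q + q')
    (hp : HasIntRoots (p + p') (p * p' - q * q')) (hq : HasIntRoots (q + q') (q * q' - p * p')) :
    hasIntEigenvalues M := by
  have hmem : M 0 0 ∈ ({p, q, q', p'} : Multiset ℤ) := hM ▸ by simp [entriesMultiset]
  simp only [Multiset.insert_eq_cons, Multiset.mem_cons, Multiset.mem_singleton] at hmem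
  rcases hmem with h | h | h | h
  · refine hasIntEigenvalues_of_entriesMultiset_eq_cons h (hM.trans ?_) hsum hp
    simp only [Multiset.insert_eq_cons, ← Multiset.singleton_add]; abel
  · refine hasIntEigenvalues_of_entriesMultiset_eq_cons h (hM.trans ?_) hsum.symm hq
    simp only [Multiset.insert_eq_cons, ← Multiset.singleton_add]; abel
  · refine hasIntEigenvalues_of_entriesMultiset_eq_cons h (hM.trans ?_) (p' := q) (q := p)
      (q' := p') (by linarith) (by rwa [add_comm, mul_comm])
    simp only [Multiset.insert_eq_cons, ← Multiset.singleton_add]; abel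
  · refine hasIntEigenvalues_of_entriesMultiset_eq_cons h (hM.trans ?_) (p' := p) (q := q)
      (q' := q') (by linarith) (by rwa [add_comm, mul_comm])
    simp only [Multiset.insert_eq_cons, ← Multiset.singleton_add]; abel

theorem even_add_add_of_sq_add_sq {r s t : ℤ} (hpy : r ^ 2 + s ^ 2 = t ^ 2) : Even (t + r + s) :=
  (Int.even_pow' two_ne_zero).1 ⟨t ^ 2 + t * r + t * s + r * s, by linear_combination hpy⟩

theorem hasIntRoots_neg_mul {r s t k l : ℤ} (hpy : r ^ 2 + s ^ 2 = t ^ 2)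
    (hkl : 2 * k * l = r * s) : HasIntRoots t (-(k * l)) := by
  obtain ⟨u, hu⟩ := even_add_add_of_sq_add_sq hpy
  refine ⟨u, t - u, by ring, ?_⟩
  have h4 : 4 * (u * (t - u)) = 4 * -(k * l) := by
    linear_combination (2 * u - t + r + s) * hu - hpy + 2 * hkl
  linarith

/-- Given a Pythagorean triple (r,s,t) and integers k, l with 2kl = rs and
t + k + l even, the numbers a = (t+k+l)/2, b = (t+k−l)/2, c = (t−k+l)/2,
d = (t−k−l)/2 are integers and every 2×2 matrix whose entries are a, b, c, d
in some order has integer eigenvalues. -/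
theorem stmt_6 (r s t k l : ℤ) (hpy : r ^ 2 + s ^ 2 = t ^ 2)
    (hkl : 2 * k * l = r * s) (heven : Even (t + k + l)) :
    ∃ a b c d : ℤ,
      2 * a = t + k + l ∧ 2 * b = t + k - l ∧ 2 * c = t - k + l ∧ 2 * d = t - k - l ∧
      ∀ M : Matrix (Fin 2) (Fin 2) ℤ,
        entriesMultiset M = {a, b, c, d} → hasIntEigenvalues M := by
  obtain ⟨e, he⟩ := heven
  refine ⟨e, e - l, e - k, e - k - l, by linarith, by linarith, by linarith, by linarith,
    fun M hM => hasIntEigenvalues_of_entriesMultiset_eq hM (by ring) ?_ ?_⟩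
  · have ht : e + (e - k - l) = t := by linarith
    rw [ht, show e * (e - k - l) - (e - l) * (e - k) = -(k * l) by ring]
    exact hasIntRoots_neg_mul hpy hkl
  · have ht : e - l + (e - k) = t := by linarith
    rw [ht, show (e - l) * (e - k) - e * (e - k - l) = -(k * -l) by ring]
    exact hasIntRoots_neg_mul (r := r) (s := -s) (l := -l) (by linear_combination hpy)
      (by linear_combination -hkl)
end

section
/- Let r, s, t be integers with r² + s² = t², r ≡ t (mod 2), and 4 ∣ s. Define a = (t + r + s/2)/2, b = (t + r − s/2)/2, c = (t − r + s/2)/2, d = (t − r − s/2)/2. Then a, b, c, d are integers and every 2×2 matrix whose four entries are a, b, c, d in some order has integer eigenvalues. -/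
lemma pairProd {x y p q : ℤ} (h : ({x, y} : Multiset ℤ) = {p, q}) : x * y = p * q := by
  have := congrArg Multiset.prod h
  simpa [Multiset.insert_eq_cons] using this

lemma rot4 (a b c d : ℤ) : ({a, b, c, d} : Multiset ℤ) = {b, c, d, a} := by
  simp only [Multiset.insert_eq_cons, ← Multiset.cons_zero]
  rw [Multiset.cons_swap a b, Multiset.cons_swap a c, Multiset.cons_swap a d]

lemma rot3 (a b c : ℤ) : ({a, b, c} : Multiset ℤ) = {b, c, a} := by
  simp only [Multiset.insert_eq_cons, ← Multiset.cons_zero]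
  rw [Multiset.cons_swap a b, Multiset.cons_swap a c]

lemma eig (m n k w x y z : ℤ) (hmn : m * n = 4 * k ^ 2)
    (h : ({w, x, y, z} : Multiset ℤ) = {m + k, m - k, n + k, n - k}) :
    ∃ l1 l2 : ℤ, l1 + l2 = w + z ∧ l1 * l2 = w * z - x * y := by
  rw [rot4 w, rot4 x, rot4 y] at h
  -- h : {z, w, x, y} = {m+k, m-k, n+k, n-k}
  have hz : z ∈ ({m + k, m - k, n + k, n - k} : Multiset ℤ) := by rw [← h]; simp
  simp only [Multiset.insert_eq_cons, Multiset.mem_cons, Multiset.mem_singleton] at hz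
  rcases hz with hz | hz | hz | hz <;> subst hz
  · replace h : ({w, x, y} : Multiset ℤ) = {m - k, n + k, n - k} :=
      Multiset.cons_inj_right _ |>.mp h
    have hw : w ∈ ({m - k, n + k, n - k} : Multiset ℤ) := by rw [← h]; simp
    simp only [Multiset.insert_eq_cons, Multiset.mem_cons, Multiset.mem_singleton] at hw
    rcases hw with hw | hw | hw <;> subst hw
    · replace h : ({x, y} : Multiset ℤ) = {n + k, n - k} :=
        Multiset.cons_inj_right _ |>.mp h
      have hxy := pairProd h
      exact ⟨m + n, m - n, by ring, by linear_combination hxy⟩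
    · rw [rot3 (m - k)] at h
      replace h : ({x, y} : Multiset ℤ) = {n - k, m - k} :=
        Multiset.cons_inj_right _ |>.mp h
      have hxy := pairProd h
      exact ⟨2 * k, m + n, by ring, by linear_combination hxy⟩
    · rw [rot3 (m - k), rot3 (n + k)] at h
      replace h : ({x, y} : Multiset ℤ) = {m - k, n + k} :=
        Multiset.cons_inj_right _ |>.mp h
      have hxy := pairProd h
      exact ⟨m + 2 * k, n - 2 * k, by ring, by linear_combination hxy + hmn⟩
  · rw [rot4 (m + k)] at h
    replace h : ({w, x, y} : Multiset ℤ) = {n + k, n - k, m + k} :=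
      Multiset.cons_inj_right _ |>.mp h
    have hw : w ∈ ({n + k, n - k, m + k} : Multiset ℤ) := by rw [← h]; simp
    simp only [Multiset.insert_eq_cons, Multiset.mem_cons, Multiset.mem_singleton] at hw
    rcases hw with hw | hw | hw <;> subst hw
    · replace h : ({x, y} : Multiset ℤ) = {n - k, m + k} :=
        Multiset.cons_inj_right _ |>.mp h
      have hxy := pairProd h
      exact ⟨m - 2 * k, n + 2 * k, by ring, by linear_combination hxy + hmn⟩
    · rw [rot3 (n + k)] at h
      replace h : ({x, y} : Multiset ℤ) = {m + k, n + k} :=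
        Multiset.cons_inj_right _ |>.mp h
      have hxy := pairProd h
      exact ⟨-(2 * k), m + n, by ring, by linear_combination hxy⟩
    · rw [rot3 (n + k), rot3 (n - k)] at h
      replace h : ({x, y} : Multiset ℤ) = {n + k, n - k} :=
        Multiset.cons_inj_right _ |>.mp h
      have hxy := pairProd h
      exact ⟨m + n, m - n, by ring, by linear_combination hxy⟩
  · rw [rot4 (m + k), rot4 (m - k)] at h
    replace h : ({w, x, y} : Multiset ℤ) = {n - k, m + k, m - k} :=
      Multiset.cons_inj_right _ |>.mp h
    have hw : w ∈ ({n - k, m + k, m - k} : Multiset ℤ) := by rw [← h]; simp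
    simp only [Multiset.insert_eq_cons, Multiset.mem_cons, Multiset.mem_singleton] at hw
    rcases hw with hw | hw | hw <;> subst hw
    · replace h : ({x, y} : Multiset ℤ) = {m + k, m - k} :=
        Multiset.cons_inj_right _ |>.mp h
      have hxy := pairProd h
      exact ⟨n + m, n - m, by ring, by linear_combination hxy⟩
    · rw [rot3 (n - k)] at h
      replace h : ({x, y} : Multiset ℤ) = {m - k, n - k} :=
        Multiset.cons_inj_right _ |>.mp h
      have hxy := pairProd h
      exact ⟨2 * k, m + n, by ring, by linear_combination hxy⟩
    · rw [rot3 (n - k), rot3 (m + k)] at h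
      replace h : ({x, y} : Multiset ℤ) = {n - k, m + k} :=
        Multiset.cons_inj_right _ |>.mp h
      have hxy := pairProd h
      exact ⟨m - 2 * k, n + 2 * k, by ring, by linear_combination hxy + hmn⟩
  · rw [rot4 (m + k), rot4 (m - k), rot4 (n + k)] at h
    replace h : ({w, x, y} : Multiset ℤ) = {m + k, m - k, n + k} :=
      Multiset.cons_inj_right _ |>.mp h
    have hw : w ∈ ({m + k, m - k, n + k} : Multiset ℤ) := by rw [← h]; simp
    simp only [Multiset.insert_eq_cons, Multiset.mem_cons, Multiset.mem_singleton] at hw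
    rcases hw with hw | hw | hw <;> subst hw
    · replace h : ({x, y} : Multiset ℤ) = {m - k, n + k} :=
        Multiset.cons_inj_right _ |>.mp h
      have hxy := pairProd h
      exact ⟨m + 2 * k, n - 2 * k, by ring, by linear_combination hxy + hmn⟩
    · rw [rot3 (m + k)] at h
      replace h : ({x, y} : Multiset ℤ) = {n + k, m + k} :=
        Multiset.cons_inj_right _ |>.mp h
      have hxy := pairProd h
      exact ⟨-(2 * k), m + n, by ring, by linear_combination hxy⟩
    · rw [rot3 (m + k), rot3 (m - k)] at h
      replace h : ({x, y} : Multiset ℤ) = {m + k, m - k} :=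
        Multiset.cons_inj_right _ |>.mp h
      have hxy := pairProd h
      exact ⟨n + m, n - m, by ring, by linear_combination hxy⟩

/-- The canonical solution: given a Pythagorean triple (r,s,t) with r ≡ t (mod 2)
and 4 ∣ s, the numbers a = (t+r+s/2)/2, b = (t+r−s/2)/2, c = (t−r+s/2)/2,
d = (t−r−s/2)/2 are integers and every 2×2 matrix whose entries are a, b, c, d
in some order has integer eigenvalues. -/
theorem stmt_10 (r s t : ℤ) (hpy : r ^ 2 + s ^ 2 = t ^ 2)
    (hpar : r ≡ t [ZMOD 2]) (hs : 4 ∣ s) :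
    ∃ a b c d : ℤ,
      4 * a = 2 * t + 2 * r + s ∧ 4 * b = 2 * t + 2 * r - s ∧
      4 * c = 2 * t - 2 * r + s ∧ 4 * d = 2 * t - 2 * r - s ∧
      ∀ M : Matrix (Fin 2) (Fin 2) ℤ,
        entriesMultiset M = {a, b, c, d} → hasIntEigenvalues M := by
  obtain ⟨k, hk⟩ := hs
  obtain ⟨n, hn⟩ := hpar.dvd
  obtain ⟨m, hm⟩ : (2 : ℤ) ∣ t + r := ⟨n + r, by linarith⟩
  have h7 : (4 : ℤ) * (m * n) = 4 * (4 * k ^ 2) := by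
    linear_combination -(t + r) * hn - (2 * n) * hm - hpy + (s + 4 * k) * hk
  have hmn : m * n = 4 * k ^ 2 := mul_left_cancel₀ (by norm_num : (4 : ℤ) ≠ 0) h7
  refine ⟨m + k, m - k, n + k, n - k, by linarith, by linarith, by linarith, by linarith, ?_⟩
  intro M hM
  simp only [entriesMultiset] at hM
  obtain ⟨l1, l2, h1, h2⟩ := eig m n k (M 0 0) (M 0 1) (M 1 0) (M 1 1) hmn hM
  exact ⟨l1, l2, by rw [Matrix.trace_fin_two]; exact h1, by rw [Matrix.det_fin_two]; exact h2⟩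
end

section
/- Let r, s, t be integers with r² + s² = t² and t odd. Then rs/2 is an even integer, the four numbers a = (t + rs/2 + 1)/2, b = (t + rs/2 − 1)/2, c = (t − rs/2 + 1)/2, d = (t − rs/2 − 1)/2 are integers, and every 2×2 matrix whose four entries are a, b, c, d in some order has integer eigenvalues. -/
lemma pair_eq' {w x a b : ℤ} (h : ({w, x} : Multiset ℤ) = {a, b}) :
    (w = a ∧ x = b) ∨ (w = b ∧ x = a) := by
  have hw : w = a ∨ w = b := by
    have hm : w ∈ ({a, b} : Multiset ℤ) := h ▸ by simp
    simpa using hm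
  rcases hw with rfl | rfl
  · left
    refine ⟨rfl, ?_⟩
    have h2 : ({x} : Multiset ℤ) = {b} := (Multiset.cons_inj_right w).mp h
    simpa using h2
  · right
    refine ⟨rfl, ?_⟩
    have h4 : ({a, w} : Multiset ℤ) = w ::ₘ {a} := Multiset.cons_swap a w {}
    rw [h4] at h
    have h2 : ({x} : Multiset ℤ) = {a} := (Multiset.cons_inj_right w).mp h
    simpa using h2

lemma triple_eq' {x y z a b c : ℤ} (h : ({x, y, z} : Multiset ℤ) = {a, b, c}) :
    (x = a ∧ ((y = b ∧ z = c) ∨ (y = c ∧ z = b))) ∨ (x = b ∧ ((y = a ∧ z = c) ∨ (y = c ∧ z = a))) ∨ (x = c ∧ ((y = a ∧ z = b) ∨ (y = b ∧ z = a))) := by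
  have hw : x = a ∨ x = b ∨ x = c := by
    have hm : x ∈ ({a, b, c} : Multiset ℤ) := h ▸ by simp
    simpa using hm
  rcases hw with rfl | rfl | rfl
  · exact Or.inl ⟨rfl, pair_eq' ((Multiset.cons_inj_right x).mp h)⟩
  · refine Or.inr (Or.inl ⟨rfl, ?_⟩)
    have h4 : ({a, x, c} : Multiset ℤ) = x ::ₘ {a, c} := Multiset.cons_swap a x {c}
    rw [h4] at h
    exact pair_eq' ((Multiset.cons_inj_right x).mp h)
  · refine Or.inr (Or.inr ⟨rfl, ?_⟩)
    have h4 : ({a, b, x} : Multiset ℤ) = x ::ₘ {a, b} := by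
      simp only [Multiset.insert_eq_cons, ← Multiset.cons_zero]
      rw [Multiset.cons_swap b x, Multiset.cons_swap a x]
    rw [h4] at h
    exact pair_eq' ((Multiset.cons_inj_right x).mp h)

lemma quad_eq' {w x y z a b c d : ℤ}
    (h : ({w, x, y, z} : Multiset ℤ) = {a, b, c, d}) :
    (w = a ∧ ((x = b ∧ ((y = c ∧ z = d) ∨ (y = d ∧ z = c))) ∨ (x = c ∧ ((y = b ∧ z = d) ∨ (y = d ∧ z = b))) ∨ (x = d ∧ ((y = b ∧ z = c) ∨ (y = c ∧ z = b))))) ∨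
    (w = b ∧ ((x = a ∧ ((y = c ∧ z = d) ∨ (y = d ∧ z = c))) ∨ (x = c ∧ ((y = a ∧ z = d) ∨ (y = d ∧ z = a))) ∨ (x = d ∧ ((y = a ∧ z = c) ∨ (y = c ∧ z = a))))) ∨
    (w = c ∧ ((x = a ∧ ((y = b ∧ z = d) ∨ (y = d ∧ z = b))) ∨ (x = b ∧ ((y = a ∧ z = d) ∨ (y = d ∧ z = a))) ∨ (x = d ∧ ((y = a ∧ z = b) ∨ (y = b ∧ z = a))))) ∨
    (w = d ∧ ((x = a ∧ ((y = b ∧ z = c) ∨ (y = c ∧ z = b))) ∨ (x = b ∧ ((y = a ∧ z = c) ∨ (y = c ∧ z = a))) ∨ (x = c ∧ ((y = a ∧ z = b) ∨ (y = b ∧ z = a))))) := by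
  have hw : w = a ∨ w = b ∨ w = c ∨ w = d := by
    have hm : w ∈ ({a, b, c, d} : Multiset ℤ) := h ▸ by simp
    simpa using hm
  rcases hw with rfl | rfl | rfl | rfl
  · exact Or.inl ⟨rfl, triple_eq' ((Multiset.cons_inj_right w).mp h)⟩
  · refine Or.inr (Or.inl ⟨rfl, ?_⟩)
    have h4 : ({a, w, c, d} : Multiset ℤ) = w ::ₘ {a, c, d} :=
      Multiset.cons_swap a w {c, d}
    rw [h4] at h
    exact triple_eq' ((Multiset.cons_inj_right w).mp h)
  · refine Or.inr (Or.inr (Or.inl ⟨rfl, ?_⟩))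
    have h4 : ({a, b, w, d} : Multiset ℤ) = w ::ₘ {a, b, d} := by
      simp only [Multiset.insert_eq_cons, ← Multiset.cons_zero]
      rw [Multiset.cons_swap b w, Multiset.cons_swap a w]
    rw [h4] at h
    exact triple_eq' ((Multiset.cons_inj_right w).mp h)
  · refine Or.inr (Or.inr (Or.inr ⟨rfl, ?_⟩))
    have h4 : ({a, b, c, w} : Multiset ℤ) = w ::ₘ {a, b, c} := by
      simp only [Multiset.insert_eq_cons, ← Multiset.cons_zero]
      rw [Multiset.cons_swap c w, Multiset.cons_swap b w, Multiset.cons_swap a w]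
    rw [h4] at h
    exact triple_eq' ((Multiset.cons_inj_right w).mp h)

/-- For a Pythagorean triple (r,s,t) with t odd, rs/2 is an even integer,
a = (t+rs/2+1)/2, b = (t+rs/2−1)/2, c = (t−rs/2+1)/2, d = (t−rs/2−1)/2 are
integers, and every 2×2 matrix whose entries are a, b, c, d in some order has
integer eigenvalues. -/
theorem stmt_13 (r s t : ℤ) (hpy : r ^ 2 + s ^ 2 = t ^ 2) (ht : Odd t) :
    4 ∣ r * s ∧
    ∃ a b c d : ℤ,
      4 * a = 2 * t + r * s + 2 ∧ 4 * b = 2 * t + r * s - 2 ∧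
      4 * c = 2 * t - r * s + 2 ∧ 4 * d = 2 * t - r * s - 2 ∧
      ∀ M : Matrix (Fin 2) (Fin 2) ℤ,
        entriesMultiset M = {a, b, c, d} → hasIntEigenvalues M := by
  obtain ⟨m, hm⟩ := ht
  have hdvd : (4 : ℤ) ∣ r * s := by
    have key : ∀ x y u : ZMod 8, x ^ 2 + y ^ 2 = (2 * u + 1) ^ 2 → 2 * (x * y) = 0 := by
      decide
    have h8 : ((2 * (r * s) : ℤ) : ZMod 8) = 0 := by
      have hc := key (r : ZMod 8) (s : ZMod 8) (m : ZMod 8) (by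
        have h0 : ((r ^ 2 + s ^ 2 : ℤ) : ZMod 8) = ((t ^ 2 : ℤ) : ZMod 8) := by rw [hpy]
        push_cast [hm] at h0
        push_cast
        linear_combination h0)
      push_cast
      linear_combination hc
    have h8' : (8 : ℤ) ∣ 2 * (r * s) := by
      have := (ZMod.intCast_zmod_eq_zero_iff_dvd (2 * (r * s)) 8).mp h8
      exact_mod_cast this
    omega
  obtain ⟨k, hk⟩ := hdvd
  have hos : Odd (r + s) := by
    have hsq : Odd ((r + s) ^ 2) := by
      have h4 : (r + s) ^ 2 = t ^ 2 + 2 * (r * s) := by linear_combination hpy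
      rw [h4]
      exact (Odd.pow ⟨m, hm⟩).add_even ⟨r * s, by ring⟩
    exact (Int.odd_pow.mp hsq).resolve_right (by norm_num)
  have hod : Odd (r - s) := by
    have hsq : Odd ((r - s) ^ 2) := by
      have h4 : (r - s) ^ 2 = t ^ 2 - 2 * (r * s) := by linear_combination hpy
      rw [h4]
      exact (Odd.pow ⟨m, hm⟩).sub_even ⟨r * s, by ring⟩
    exact (Int.odd_pow.mp hsq).resolve_right (by norm_num)
  obtain ⟨e, he'⟩ := hos
  obtain ⟨f, hf'⟩ := hod
  have he : e ^ 2 + e = m ^ 2 + m + 2 * k := by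
    have h4 : (r + s) ^ 2 = t ^ 2 + 2 * (r * s) := by linear_combination hpy
    rw [he', hm, hk] at h4
    nlinarith [h4]
  have hf : f ^ 2 + f = m ^ 2 + m - 2 * k := by
    have h4 : (r - s) ^ 2 = t ^ 2 - 2 * (r * s) := by linear_combination hpy
    rw [hf', hm, hk] at h4
    nlinarith [h4]
  refine ⟨⟨k, hk⟩, m + k + 1, m + k, m - k + 1, m - k,
    by rw [hk, hm]; ring, by rw [hk, hm]; ring, by rw [hk, hm]; ring, by rw [hk, hm]; ring, ?_⟩
  intro M hM
  unfold entriesMultiset at hM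
  unfold hasIntEigenvalues
  rw [Matrix.trace_fin_two, Matrix.det_fin_two]
  rcases quad_eq' hM with
      ⟨h1, (⟨h2, (⟨h3, h4⟩ | ⟨h3, h4⟩)⟩ | ⟨h2, (⟨h3, h4⟩ | ⟨h3, h4⟩)⟩ | ⟨h2, (⟨h3, h4⟩ | ⟨h3, h4⟩)⟩)⟩ |
      ⟨h1, (⟨h2, (⟨h3, h4⟩ | ⟨h3, h4⟩)⟩ | ⟨h2, (⟨h3, h4⟩ | ⟨h3, h4⟩)⟩ | ⟨h2, (⟨h3, h4⟩ | ⟨h3, h4⟩)⟩)⟩ |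
      ⟨h1, (⟨h2, (⟨h3, h4⟩ | ⟨h3, h4⟩)⟩ | ⟨h2, (⟨h3, h4⟩ | ⟨h3, h4⟩)⟩ | ⟨h2, (⟨h3, h4⟩ | ⟨h3, h4⟩)⟩)⟩ |
      ⟨h1, (⟨h2, (⟨h3, h4⟩ | ⟨h3, h4⟩)⟩ | ⟨h2, (⟨h3, h4⟩ | ⟨h3, h4⟩)⟩ | ⟨h2, (⟨h3, h4⟩ | ⟨h3, h4⟩)⟩)⟩ <;>
    rw [h1, h2, h3, h4] <;>
    first
    | (refine ⟨2 * m + 1, 2 * k, ?_, ?_⟩ <;> ring1)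
    | (refine ⟨2 * m + 1, -(2 * k), ?_, ?_⟩ <;> ring1)
    | (refine ⟨2 * m + 1, 1, ?_, ?_⟩ <;> ring1)
    | (refine ⟨2 * m + 1, -1, ?_, ?_⟩ <;> ring1)
    | (refine ⟨m + e + 1, m - e, ?_, ?_⟩ <;>
        first | ring1 | linear_combination -he | linear_combination he)
    | (refine ⟨m + f + 1, m - f, ?_, ?_⟩ <;>
        first | ring1 | linear_combination -hf | linear_combination hf)
end

section
/- Let r, s, t, p, q be integers with r² + s² = t² and rs even. Then every 2×2 matrix whose four entries are pqt + p² + q²rs/2, pqt + p² − q²rs/2, pqt − p² + q²rs/2, pqt − p² − q²rs/2 in some order has integer eigenvalues. -/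
theorem Multiset.forall_mem_powersetCard_two_of_four {α : Type*} [DecidableEq α] {w x y z : α}
    (P : Multiset α → Multiset α → Prop) (hwx : P {w, x} {y, z}) (hwy : P {w, y} {x, z})
    (hwz : P {w, z} {x, y}) (hxy : P {x, y} {w, z}) (hxz : P {x, z} {w, y})
    (hyz : P {y, z} {w, x}) :
    ∀ D ∈ powersetCard 2 {w, x, y, z}, P D ({w, x, y, z} - D) := by
  have split {D O : Multiset α} (hP : P D O) (hS : {w, x, y, z} = D + O) :
      P D ({w, x, y, z} - D) := by
    rwa [hS, add_tsub_cancel_left]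
  intro D hD
  simp only [insert_eq_cons, powersetCard_cons, Nat.reduceAdd, card_singleton, Order.lt_two_iff,
    Std.le_refl, powersetCard_eq_empty, powersetCard_one, map_singleton, zero_add,
    powersetCard_zero_left, cons_zero, singleton_add, map_cons, add_cons, cons_add, mem_cons,
    mem_singleton] at hD
  rcases hD with rfl | rfl | rfl | rfl | rfl | rfl <;> refine split ‹_› ?_ <;>
    simp only [insert_eq_cons, ← singleton_add] <;> abel

theorem hasIntEigenvalues_of_forall_mem_powersetCard_two {M : Matrix (Fin 2) (Fin 2) ℤ} {S : Multiset ℤ}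
    (hM : entriesMultiset M = S)
    (h : ∀ D ∈ S.powersetCard 2, ∃ l₁ l₂ : ℤ, l₁ + l₂ = D.sum ∧ l₁ * l₂ = D.prod - (S - D).prod) :
    hasIntEigenvalues M := by
  have hS : S = {M 0 0, M 1 1} + {M 0 1, M 1 0} := by
    rw [← hM, entriesMultiset]
    simp only [Multiset.insert_eq_cons, ← Multiset.singleton_add]
    abel
  obtain ⟨l₁, l₂, htr, hdet⟩ := h {M 0 0, M 1 1} <| Multiset.mem_powersetCard.2
    ⟨hS ▸ Multiset.le_add_right _ _, rfl⟩
  rw [hS, add_tsub_cancel_left] at hdet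
  refine ⟨l₁, l₂, ?_, ?_⟩
  · simpa [Matrix.trace_fin_two] using htr
  · simpa [Matrix.det_fin_two] using hdet

theorem hasIntEigenvalues_of_entriesMultiset_eq_s14 {M : Matrix (Fin 2) (Fin 2) ℤ} {m x y k l : ℤ}
    (hk : m ^ 2 + 4 * x * y = k ^ 2) (hl : m ^ 2 - 4 * x * y = l ^ 2)
    (hM : entriesMultiset M = {m + x + y, m + x - y, m - x + y, m - x - y}) :
    hasIntEigenvalues M := by
  refine hasIntEigenvalues_of_forall_mem_powersetCard_two hM <|
    Multiset.forall_mem_powersetCard_two_of_four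
      (fun D O => ∃ l₁ l₂ : ℤ, l₁ + l₂ = D.sum ∧ l₁ * l₂ = D.prod - O.prod) ?_ ?_ ?_ ?_ ?_ ?_ <;>
    simp only [Multiset.insert_eq_cons, Multiset.sum_cons, Multiset.prod_cons,
      Multiset.sum_singleton, Multiset.prod_singleton]
  · exact ⟨2 * m, 2 * x, by ring, by ring⟩
  · exact ⟨2 * m, 2 * y, by ring, by ring⟩
  · exact ⟨m + k, m - k, by ring, by linear_combination hk⟩
  · exact ⟨m + l, m - l, by ring, by linear_combination hl⟩
  · exact ⟨2 * m, -2 * y, by ring, by ring⟩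
  · exact ⟨2 * m, -2 * x, by ring, by ring⟩

/-- For a Pythagorean triple (r,s,t) with rs even and any integers p, q, every
2×2 matrix whose entries are pqt ± p² ± q²rs/2 in some order has integer
eigenvalues. -/
theorem stmt_14 (r s t p q : ℤ) (hpy : r ^ 2 + s ^ 2 = t ^ 2) (hev : 2 ∣ r * s) :
    ∀ M : Matrix (Fin 2) (Fin 2) ℤ,
      entriesMultiset M =
        {p * q * t + p ^ 2 + q ^ 2 * (r * s / 2),
         p * q * t + p ^ 2 - q ^ 2 * (r * s / 2),
         p * q * t - p ^ 2 + q ^ 2 * (r * s / 2),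
         p * q * t - p ^ 2 - q ^ 2 * (r * s / 2)} →
      hasIntEigenvalues M := by
  intro M hM
  have hrs : 2 * (r * s / 2) = r * s := Int.mul_ediv_cancel' hev
  refine hasIntEigenvalues_of_entriesMultiset_eq_s14 (k := p * q * (r + s)) (l := p * q * (r - s))
    ?_ ?_ hM
  · linear_combination -p ^ 2 * q ^ 2 * hpy + 2 * p ^ 2 * q ^ 2 * hrs
  · linear_combination -p ^ 2 * q ^ 2 * hpy - 2 * p ^ 2 * q ^ 2 * hrs
end

section
/- Let r, s, t, k, l be integers with r² + s² = t², 2kl = rs, and t + k + l even, and set a = (t + k + l)/2, b = (t + k − l)/2, c = (t − k + l)/2, d = (t − k − l)/2. Then t + r + s and t + r − s are even, the matrix with rows (a, b), (c, d) has eigenvalues (t + r + s)/2 and (t − r − s)/2, and the matrix with rows (b, a), (d, c) has eigenvalues (t + r − s)/2 and (t − r + s)/2. In particular these eigenvalues are independent of the choice of k and l. -/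
/-!
Since x² ≡ x mod 2, r² + s² = t² forces r + s ≡ t, whence the parity claims. Both matrices have trace
t, and their determinants are ∓kl = ∓rs/2; since t² − (r ± s)² = ∓2rs, the numbers
(t ± (r + s))/2, resp. (t ± (r − s))/2, have exactly this sum and product.
-/

theorem Int.even_add_add_of_sq_add_sq_eq_sq {r s t : ℤ} (h : r ^ 2 + s ^ 2 = t ^ 2) :
    Even (t + r + s) := by
  have hsq : Even (t ^ 2 + r ^ 2 + s ^ 2) := ⟨t ^ 2, by linear_combination h⟩
  simpa [Int.even_add, Int.even_pow] using hsq

theorem Int.even_add_sub_of_sq_add_sq_eq_sq {r s t : ℤ} (h : r ^ 2 + s ^ 2 = t ^ 2) :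
    Even (t + r - s) := by
  have h' : t + r - s = t + r + s - 2 * s := by ring
  rw [h']
  exact (Int.even_add_add_of_sq_add_sq_eq_sq h).sub (even_two_mul s)

theorem Int.exists_half_add_half_sub {t u p : ℤ} (hu : Even (t + u)) (hp : 4 * p = t ^ 2 - u ^ 2) :
    ∃ lam1 lam2 : ℤ, 2 * lam1 = t + u ∧ 2 * lam2 = t - u ∧ lam1 + lam2 = t ∧ lam1 * lam2 = p := by
  obtain ⟨e, he⟩ := hu
  refine ⟨e, t - e, by omega, by omega, by ring, ?_⟩
  have h4 : 4 * (e * (t - e)) = 4 * p := by linear_combination (u - t + 2 * e) * he - hp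
  exact mul_left_cancel₀ four_ne_zero h4

theorem trace_of_half_sums {t k l a b c d : ℤ} (ha : 2 * a = t + k + l)
    (hd : 2 * d = t - k - l) : Matrix.trace !![a, b; c, d] = t := by
  rw [Matrix.trace_fin_two_of]
  omega

theorem trace_swap_of_half_sums {t k l a b c d : ℤ} (hb : 2 * b = t + k - l)
    (hc : 2 * c = t - k + l) : Matrix.trace !![b, a; d, c] = t := by
  rw [Matrix.trace_fin_two_of]
  omega

theorem det_of_half_sums {t k l a b c d : ℤ} (ha : 2 * a = t + k + l)
    (hb : 2 * b = t + k - l) (hc : 2 * c = t - k + l) (hd : 2 * d = t - k - l) :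
    Matrix.det !![a, b; c, d] = -(k * l) := by
  rw [Matrix.det_fin_two_of]
  have h4 : 4 * (a * d - b * c) = 4 * -(k * l) := by
    linear_combination (2 * d) * ha + (t + k + l) * hd - (2 * c) * hb - (t + k - l) * hc
  exact mul_left_cancel₀ four_ne_zero h4

theorem det_swap_of_half_sums {t k l a b c d : ℤ} (ha : 2 * a = t + k + l)
    (hb : 2 * b = t + k - l) (hc : 2 * c = t - k + l) (hd : 2 * d = t - k - l) :
    Matrix.det !![b, a; d, c] = k * l := by
  rw [Matrix.det_fin_two_of]
  have h4 : 4 * (b * c - a * d) = 4 * (k * l) := by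
    linear_combination (2 * c) * hb + (t + k - l) * hc - (2 * d) * ha - (t + k + l) * hd
  exact mul_left_cancel₀ four_ne_zero h4

/-- For the general solution generated by a Pythagorean triple (r,s,t) via
2kl = rs, the matrices (a b; c d) and (b a; d c) have eigenvalues
(t ± (r+s))/2 and (t ± (r−s))/2 respectively, independently of k and l. -/
theorem stmt_15 (r s t k l a b c d : ℤ) (hpy : r ^ 2 + s ^ 2 = t ^ 2)
    (hkl : 2 * k * l = r * s)
    (ha : 2 * a = t + k + l) (hb : 2 * b = t + k - l)
    (hc : 2 * c = t - k + l) (hd : 2 * d = t - k - l) :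
    Even (t + r + s) ∧ Even (t + r - s) ∧
    (∃ lam1 lam2 : ℤ, 2 * lam1 = t + r + s ∧ 2 * lam2 = t - r - s ∧
      lam1 + lam2 = Matrix.trace !![a, b; c, d] ∧
      lam1 * lam2 = Matrix.det !![a, b; c, d]) ∧
    (∃ lam1 lam2 : ℤ, 2 * lam1 = t + r - s ∧ 2 * lam2 = t - r + s ∧
      lam1 + lam2 = Matrix.trace !![b, a; d, c] ∧
      lam1 * lam2 = Matrix.det !![b, a; d, c]) := by
  have hsum := Int.even_add_add_of_sq_add_sq_eq_sq hpy
  have hdiff := Int.even_add_sub_of_sq_add_sq_eq_sq hpy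
  rw [trace_of_half_sums ha hd, det_of_half_sums ha hb hc hd,
    trace_swap_of_half_sums hb hc, det_swap_of_half_sums ha hb hc hd]
  obtain ⟨lam1, lam2, h1, h2, hadd, hmul⟩ := Int.exists_half_add_half_sub (u := r + s)
    (p := -(k * l)) (by rwa [← add_assoc]) (by linear_combination hpy - 2 * hkl)
  obtain ⟨mu1, mu2, h1', h2', hadd', hmul'⟩ := Int.exists_half_add_half_sub (u := r - s)
    (p := k * l) (by rwa [← add_sub_assoc]) (by linear_combination hpy + 2 * hkl)
  exact ⟨hsum, hdiff, ⟨lam1, lam2, by linarith, by linarith, hadd, hmul⟩,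
    ⟨mu1, mu2, by linarith, by linarith, hadd', hmul'⟩⟩
end
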